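/- Let Q be an associative quasigroup (i.e. a group) and H a Q-graded Hopf quasigroup. Define δ(h,g,f) = ((h_{(1)}g_{(1)})f_{(1)})S_{pqr}(h_{(2)}(g_{(2)}f_{(2)})) for h ∈ H_p, g ∈ H_q, f ∈ H_r. Then δ is an associator: (hg)f = δ(h_{(1)},g_{(1)},f_{(1)})(h_{(2)}(g_{(2)}f_{(2)})), and δ is the unique trilinear family satisfying this identity. -/

import Mathlib

open TensorProduct

universe u v w

/-- A quasigroup: a set with product, identity `e`, and two-sided inverses satisfying
`p⁻¹(pq) = q` and `(qp)p⁻¹ = q`. -/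
structure QuasigroupStruct (Q : Type u) where
  mul : Q → Q → Q
  one : Q
  inv : Q → Q
  mul_one : ∀ p, mul p one = p
  one_mul : ∀ p, mul one p = p
  inv_mul_cancel : ∀ p q, mul (inv p) (mul p q) = q
  mul_inv_cancel : ∀ p q, mul (mul q p) (inv p) = q

namespace QuasigroupStruct

variable {Q : Type u} (G : QuasigroupStruct Q)

lemma inv_mul_self (p : Q) : G.mul (G.inv p) p = G.one := by
  have h := G.inv_mul_cancel p G.one
  rwa [G.mul_one] at h

lemma mul_inv_self (p : Q) : G.mul p (G.inv p) = G.one := by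
  have h := G.mul_inv_cancel p G.one
  rwa [G.one_mul] at h

lemma inv_inv (p : Q) : G.inv (G.inv p) = p := by
  have h := G.inv_mul_cancel (G.inv p) p
  rw [G.inv_mul_self p] at h
  rwa [G.mul_one] at h

lemma mul_inv_cancel_left (p q : Q) : G.mul p (G.mul (G.inv p) q) = q := by
  have h := G.inv_mul_cancel (G.inv p) q
  rwa [G.inv_inv] at h

lemma inv_mul_cancel_right (p q : Q) : G.mul (G.mul q (G.inv p)) p = q := by
  have h := G.mul_inv_cancel (G.inv p) q
  rwa [G.inv_inv] at h

lemma mul_inv_rev (p q : Q) : G.inv (G.mul p q) = G.mul (G.inv q) (G.inv p) := by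
  have h1 : G.mul q (G.inv (G.mul p q)) = G.inv p := by
    have h := G.mul_inv_cancel (G.mul p q) (G.inv p)
    rwa [G.inv_mul_cancel p q] at h
  calc G.inv (G.mul p q)
      = G.mul (G.inv q) (G.mul q (G.inv (G.mul p q))) := (G.inv_mul_cancel q _).symm
    _ = G.mul (G.inv q) (G.inv p) := by rw [h1]

lemma inv_one : G.inv G.one = G.one := by
  have h := G.inv_mul_cancel G.one G.one
  rwa [G.one_mul, G.mul_one] at h

end QuasigroupStruct

/-- Transport along an equality of grades, as a linear map. -/
def gcl {Q : Type u} {H : Q → Type w} {k : Type v} [CommSemiring k]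
    [∀ p, AddCommMonoid (H p)] [∀ p, Module k (H p)] {p q : Q} (e : p = q) :
    H p →ₗ[k] H q := by subst e; exact LinearMap.id

/-- A `Q`-graded Hopf quasigroup: a family of coassociative counital coalgebras `H p`
with a (not necessarily associative) graded multiplication, unit and antipode family,
such that the multiplications and the unit are coalgebra maps and the antipode
satisfies the Hopf quasigroup axioms. -/
structure GradedHopfQuasigroup (k : Type v) [CommRing k] {Q : Type u} (G : QuasigroupStruct Q)
    (H : Q → Type w) [∀ p, AddCommGroup (H p)] [∀ p, Module k (H p)]
    [∀ p, Coalgebra k (H p)] where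
  mul : ∀ p q, H p →ₗ[k] H q →ₗ[k] H (G.mul p q)
  one : H G.one
  antipode : ∀ p, H p →ₗ[k] H (G.inv p)
  mul_one' : ∀ (p : Q) (h : H p), gcl (k := k) (G.mul_one p) ((mul p G.one h) one) = h
  one_mul' : ∀ (p : Q) (h : H p), gcl (k := k) (G.one_mul p) ((mul G.one p one) h) = h
  comul_mul : ∀ (p q : Q) (h : H p) (g : H q),
    Coalgebra.comul (R := k) ((mul p q h) g) =
      (TensorProduct.map (TensorProduct.lift (mul p q)) (TensorProduct.lift (mul p q)))
        ((TensorProduct.tensorTensorTensorComm k (H p) (H p) (H q) (H q))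
          (Coalgebra.comul h ⊗ₜ[k] Coalgebra.comul g))
  counit_mul : ∀ (p q : Q) (h : H p) (g : H q),
    Coalgebra.counit (R := k) ((mul p q h) g) =
      Coalgebra.counit (R := k) h * Coalgebra.counit (R := k) g
  comul_one : Coalgebra.comul (R := k) one = one ⊗ₜ[k] one
  counit_one : Coalgebra.counit (R := k) one = 1
  /-- `S (h₁) (h₂ g) = ε(h) g` -/
  antipode_mul_left : ∀ (p q : Q) (h : H p) (g : H q),
    TensorProduct.lift
      (((mul (G.inv p) (G.mul p q)).comp (antipode p)).compl₂ ((mul p q).flip g))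
      (Coalgebra.comul h)
      = gcl (k := k) (G.inv_mul_cancel p q).symm (Coalgebra.counit (R := k) h • g)
  /-- `h₁ (S (h₂) g) = ε(h) g` -/
  antipode_mul_left' : ∀ (p q : Q) (h : H p) (g : H q),
    TensorProduct.lift
      ((mul p (G.mul (G.inv p) q)).compl₂ (((mul (G.inv p) q).flip g).comp (antipode p)))
      (Coalgebra.comul h)
      = gcl (k := k) (G.mul_inv_cancel_left p q).symm (Coalgebra.counit (R := k) h • g)
  /-- `(g S (h₁)) h₂ = ε(h) g` -/
  antipode_mul_right : ∀ (p q : Q) (h : H p) (g : H q),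
    TensorProduct.lift
      ((mul (G.mul q (G.inv p)) p).comp ((mul q (G.inv p) g).comp (antipode p)))
      (Coalgebra.comul h)
      = gcl (k := k) (G.inv_mul_cancel_right p q).symm (Coalgebra.counit (R := k) h • g)
  /-- `(g h₁) S (h₂) = ε(h) g` -/
  antipode_mul_right' : ∀ (p q : Q) (h : H p) (g : H q),
    TensorProduct.lift
      (((mul (G.mul q p) (G.inv p)).comp (mul q p g)).compl₂ (antipode p))
      (Coalgebra.comul h)
      = gcl (k := k) (G.mul_inv_cancel p q).symm (Coalgebra.counit (R := k) h • g)

variable {k : Type v} [Field k] {Q : Type u} {G : QuasigroupStruct Q}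
  {H : Q → Type w} [∀ p, AddCommGroup (H p)] [∀ p, Module k (H p)]
  [∀ p, Coalgebra k (H p)]

variable (A : GradedHopfQuasigroup k G H)

/-- Uncurried graded multiplication. -/
noncomputable def mm (p q : Q) : H p ⊗[k] H q →ₗ[k] H (G.mul p q) :=
  TensorProduct.lift (A.mul p q)

/-- `h ⊗ (g ⊗ f) ↦ (hg)f`. -/
noncomputable def mulLeft (p q r : Q) :
    H p ⊗[k] (H q ⊗[k] H r) →ₗ[k] H (G.mul (G.mul p q) r) :=
  (mm A (G.mul p q) r) ∘ₗ
    (TensorProduct.map (mm A p q) LinearMap.id) ∘ₗ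
      (TensorProduct.assoc k (H p) (H q) (H r)).symm.toLinearMap

/-- `h ⊗ (g ⊗ f) ↦ h(gf)`. -/
noncomputable def mulRight (p q r : Q) :
    H p ⊗[k] (H q ⊗[k] H r) →ₗ[k] H (G.mul p (G.mul q r)) :=
  (mm A p (G.mul q r)) ∘ₗ LinearMap.lTensor (H p) (mm A q r)

/-- `h ⊗ (g ⊗ f) ↦ Δh ⊗ (Δg ⊗ Δf)`, rearranged into
`(h₁ ⊗ (g₁ ⊗ f₁)) ⊗ (h₂ ⊗ (g₂ ⊗ f₂))`. -/
noncomputable def comul3 (p q r : Q) :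
    H p ⊗[k] (H q ⊗[k] H r) →ₗ[k]
      (H p ⊗[k] (H q ⊗[k] H r)) ⊗[k] (H p ⊗[k] (H q ⊗[k] H r)) :=
  (TensorProduct.tensorTensorTensorComm k (H p) (H p)
      (H q ⊗[k] H r) (H q ⊗[k] H r)).toLinearMap ∘ₗ
    (LinearMap.lTensor (H p ⊗[k] H p)
      (TensorProduct.tensorTensorTensorComm k (H q) (H q) (H r) (H r)).toLinearMap) ∘ₗ
      (TensorProduct.map (Coalgebra.comul (R := k))
        (TensorProduct.map (Coalgebra.comul (R := k)) (Coalgebra.comul (R := k))))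

/-- Uncurry a trilinear map. -/
noncomputable def uncurry3 {P : Type w}
    [AddCommGroup P] [Module k P]
    {X Y Z : Type w} [AddCommGroup X] [Module k X] [AddCommGroup Y] [Module k Y]
    [AddCommGroup Z] [Module k Z]
    (f : X →ₗ[k] Y →ₗ[k] Z →ₗ[k] P) : X ⊗[k] (Y ⊗[k] Z) →ₗ[k] P :=
  TensorProduct.lift ((TensorProduct.lift.equiv (RingHom.id k) Y Z P).toLinearMap ∘ₗ f)

/-- The associator `δ(h,g,f) = ((h₁g₁)f₁) S((h₂(g₂f₂)))`, valued in `H e`. -/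
noncomputable def delta0
    (hassoc : ∀ a b c, G.mul (G.mul a b) c = G.mul a (G.mul b c)) (p q r : Q) :
    H p →ₗ[k] H q →ₗ[k] H r →ₗ[k] H G.one :=
  (TensorProduct.lcurry (RingHom.id k) (H q) (H r) (H G.one)) ∘ₗ
    TensorProduct.curry
      ((gcl (k := k) (show G.mul (G.mul (G.mul p q) r)
            (G.inv (G.mul p (G.mul q r))) = G.one by
          rw [hassoc p q r]; exact G.mul_inv_self _)) ∘ₗ
        (mm A (G.mul (G.mul p q) r) (G.inv (G.mul p (G.mul q r)))) ∘ₗ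
          (TensorProduct.map (mulLeft A p q r)
            ((A.antipode (G.mul p (G.mul q r))) ∘ₗ mulRight A p q r)) ∘ₗ
            comul3 p q r)

/-- `δ'` is an associator for `H` :
`(hg)f = δ'(h₁,g₁,f₁) (h₂(g₂f₂))`. -/
noncomputable def IsAssociator
    (hassoc : ∀ a b c, G.mul (G.mul a b) c = G.mul a (G.mul b c))
    (δ' : ∀ p q r : Q, H p →ₗ[k] H q →ₗ[k] H r →ₗ[k] H G.one) : Prop :=
  ∀ (p q r : Q) (x : H p ⊗[k] (H q ⊗[k] H r)),
    mulLeft A p q r x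
      = gcl (k := k) (show G.mul G.one (G.mul p (G.mul q r))
            = G.mul (G.mul p q) r by rw [G.one_mul, hassoc p q r])
          ((mm A G.one (G.mul p (G.mul q r)))
            ((TensorProduct.map (uncurry3 (δ' p q r)) (mulRight A p q r))
              (comul3 p q r x)))

/-!
Write `x ↦ x₁ ⊗ x₂` for the comultiplication of the tensor product coalgebra
`C = H_p ⊗ (H_q ⊗ H_r)`, and `L x = (hg)f`, `M x = h(gf)` for `x = h ⊗ (g ⊗ f)`. Since the
multiplications are coalgebra maps, so is `M`. For linear maps out of `C` the convolution
`(F ⋆ F') x = F(x₁) F'(x₂)` satisfies `(F ⋆ S M) ⋆ M = F` and `(F ⋆ M) ⋆ S M = F` by the two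
right antipode axioms. As `δ = L ⋆ S M`, the first identity is the associator identity `δ ⋆ M = L`,
and if also `L = δ' ⋆ M`, the second gives `δ = (δ' ⋆ M) ⋆ S M = δ'`.
-/

open Coalgebra

lemma gcl_refl {ι R : Type*} [CommSemiring R] {M : ι → Type*} [∀ i, AddCommMonoid (M i)]
    [∀ i, Module R (M i)] {i : ι} (e : i = i) : gcl (k := R) (H := M) e = LinearMap.id :=
  rfl

lemma gcl_comp_gcl {ι R : Type*} [CommSemiring R] {M : ι → Type*} [∀ i, AddCommMonoid (M i)]
    [∀ i, Module R (M i)] {i j l : ι} (e : i = j) (e' : j = l) :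
    gcl (k := R) (H := M) e' ∘ₗ gcl e = gcl (e.trans e') := by
  subst e e'; rfl

lemma uncurry3_lcurry_comp_curry {X Y Z P : Type w} [AddCommGroup X] [Module k X]
    [AddCommGroup Y] [Module k Y] [AddCommGroup Z] [Module k Z] [AddCommGroup P] [Module k P]
    (F : X ⊗[k] (Y ⊗[k] Z) →ₗ[k] P) :
    uncurry3 (TensorProduct.lcurry (RingHom.id k) Y Z P ∘ₗ TensorProduct.curry F) = F := by
  ext x y z; rfl

lemma uncurry3_injective {X Y Z P : Type w} [AddCommGroup X] [Module k X]
    [AddCommGroup Y] [Module k Y] [AddCommGroup Z] [Module k Z] [AddCommGroup P] [Module k P] :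
    Function.Injective (uncurry3 (k := k) (X := X) (Y := Y) (Z := Z) (P := P)) := by
  intro F F' h
  ext x y z
  exact LinearMap.congr_fun h (x ⊗ₜ (y ⊗ₜ z))

namespace GradedHopfQuasigroup

noncomputable def mmCoalgHom (p q : Q) : H p ⊗[k] H q →ₗc[k] H (G.mul p q) where
  toLinearMap := mm A p q
  counit_comp := by
    ext h g
    simp [mm, A.counit_mul, mul_comm]
  map_comp_comul := by
    ext h g
    simp [mm, A.comul_mul, TensorProduct.AlgebraTensorModule.tensorTensorTensorComm_eq]

noncomputable def mulRightCoalgHom (p q r : Q) :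
    H p ⊗[k] (H q ⊗[k] H r) →ₗc[k] H (G.mul p (G.mul q r)) :=
  (A.mmCoalgHom p (G.mul q r)).comp
    (Coalgebra.TensorProduct.map (CoalgHom.id k (H p)) (A.mmCoalgHom q r))

lemma mulRightCoalgHom_toLinearMap (p q r : Q) :
    (A.mulRightCoalgHom p q r : H p ⊗[k] (H q ⊗[k] H r) →ₗ[k] _) = mulRight A p q r := by
  ext h g f; rfl

lemma comul3_eq_comul (p q r : Q) : comul3 (k := k) (H := H) p q r = comul := by
  ext h g f; rfl

lemma antipode_mul_right_map (p q : Q) :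
    mm A (G.mul q (G.inv p)) p
        ∘ₗ TensorProduct.map (mm A q (G.inv p)) LinearMap.id
        ∘ₗ (TensorProduct.assoc k (H q) (H (G.inv p)) (H p)).symm.toLinearMap
        ∘ₗ TensorProduct.map LinearMap.id (TensorProduct.map (A.antipode p) LinearMap.id ∘ₗ comul)
      = gcl (G.inv_mul_cancel_right p q).symm ∘ₗ (TensorProduct.rid k (H q)).toLinearMap
          ∘ₗ TensorProduct.map LinearMap.id counit := by
  apply TensorProduct.ext'
  intro g h
  have on_comul : ∀ t : H p ⊗[k] H p,
      mm A _ p (TensorProduct.map (mm A q (G.inv p)) LinearMap.id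
        ((TensorProduct.assoc k _ _ _).symm (g ⊗ₜ TensorProduct.map (A.antipode p) LinearMap.id t)))
      = TensorProduct.lift ((A.mul _ p).comp ((A.mul q (G.inv p) g).comp (A.antipode p))) t := by
    intro t
    induction t using TensorProduct.induction_on with
    | zero => simp
    | tmul x y => simp [mm]
    | add x y hx hy => simp_all [TensorProduct.tmul_add]
  simpa [on_comul] using A.antipode_mul_right p q h g

lemma antipode_mul_right'_map (p q : Q) :
    mm A (G.mul q p) (G.inv p)
        ∘ₗ TensorProduct.map (mm A q p) LinearMap.id
        ∘ₗ (TensorProduct.assoc k (H q) (H p) (H (G.inv p))).symm.toLinearMap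
        ∘ₗ TensorProduct.map LinearMap.id (TensorProduct.map LinearMap.id (A.antipode p) ∘ₗ comul)
      = gcl (G.mul_inv_cancel p q).symm ∘ₗ (TensorProduct.rid k (H q)).toLinearMap
          ∘ₗ TensorProduct.map LinearMap.id counit := by
  apply TensorProduct.ext'
  intro g h
  have on_comul : ∀ t : H p ⊗[k] H p,
      mm A _ (G.inv p) (TensorProduct.map (mm A q p) LinearMap.id
        ((TensorProduct.assoc k _ _ _).symm (g ⊗ₜ TensorProduct.map LinearMap.id (A.antipode p) t)))
      = TensorProduct.lift (((A.mul _ (G.inv p)).comp (A.mul q p g)).compl₂ (A.antipode p)) t := by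
    intro t
    induction t using TensorProduct.induction_on with
    | zero => simp
    | tmul x y => simp [mm]
    | add x y hx hy => simp_all [TensorProduct.tmul_add]
  simpa [on_comul] using A.antipode_mul_right' p q h g

section Convolution

variable {C : Type*} [AddCommGroup C] [Module k C] [Coalgebra k C]

noncomputable def conv {a b : Q} (F : C →ₗ[k] H a) (F' : C →ₗ[k] H b) :
    C →ₗ[k] H (G.mul a b) :=
  mm A a b ∘ₗ TensorProduct.map F F' ∘ₗ comul

lemma conv_gcl_left {a a' b : Q} (e : a = a') (F : C →ₗ[k] H a) (F' : C →ₗ[k] H b) :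
    A.conv (gcl e ∘ₗ F) F' = gcl (congrArg (G.mul · b) e) ∘ₗ A.conv F F' := by
  subst e; rfl

lemma antipode_conv_cancel_right (p q : Q) (F : C →ₗ[k] H q) (g : C →ₗc[k] H p) :
    A.conv (A.conv F (A.antipode p ∘ₗ g)) g = gcl (G.inv_mul_cancel_right p q).symm ∘ₗ F := by
  calc A.conv (A.conv F (A.antipode p ∘ₗ g)) g
      = (gcl (G.inv_mul_cancel_right p q).symm ∘ₗ (TensorProduct.rid k (H q)).toLinearMap
          ∘ₗ TensorProduct.map LinearMap.id counit) ∘ₗ TensorProduct.map F (g : C →ₗ[k] H p) ∘ₗ comul := by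
        rw [← A.antipode_mul_right_map]
        simp only [conv, ← CoalgHomClass.map_comp_comul, coassoc_simps]
    _ = gcl (G.inv_mul_cancel_right p q).symm ∘ₗ F := by
        simp only [coassoc_simps, CoalgHomClass.counit_comp,
          CoassocSimps.map_counit_comp_comul_right]

lemma conv_antipode_cancel_right (p q : Q) (F : C →ₗ[k] H q) (g : C →ₗc[k] H p) :
    A.conv (A.conv F g) (A.antipode p ∘ₗ g) = gcl (G.mul_inv_cancel p q).symm ∘ₗ F := by
  calc A.conv (A.conv F g) (A.antipode p ∘ₗ g)
      = (gcl (G.mul_inv_cancel p q).symm ∘ₗ (TensorProduct.rid k (H q)).toLinearMap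
          ∘ₗ TensorProduct.map LinearMap.id counit) ∘ₗ TensorProduct.map F (g : C →ₗ[k] H p) ∘ₗ comul := by
        rw [← A.antipode_mul_right'_map]
        simp only [conv, ← CoalgHomClass.map_comp_comul, coassoc_simps]
    _ = gcl (G.mul_inv_cancel p q).symm ∘ₗ F := by
        simp only [coassoc_simps, CoalgHomClass.counit_comp,
          CoassocSimps.map_counit_comp_comul_right]

end Convolution

variable (hassoc : ∀ a b c, G.mul (G.mul a b) c = G.mul a (G.mul b c))

lemma uncurry3_delta0 (p q r : Q) :
    uncurry3 (delta0 A hassoc p q r) =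
      gcl (by rw [hassoc p q r]; exact G.mul_inv_self _) ∘ₗ
        A.conv (mulLeft A p q r) (A.antipode (G.mul p (G.mul q r)) ∘ₗ mulRight A p q r) := by
  rw [delta0, uncurry3_lcurry_comp_curry, comul3_eq_comul]
  rfl

lemma isAssociator_iff (δ : ∀ p q r : Q, H p →ₗ[k] H q →ₗ[k] H r →ₗ[k] H G.one) :
    IsAssociator A hassoc δ ↔ ∀ p q r, mulLeft A p q r =
      gcl (by rw [G.one_mul, hassoc p q r]) ∘ₗ A.conv (uncurry3 (δ p q r)) (mulRight A p q r) := by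
  simp only [IsAssociator, LinearMap.ext_iff, comul3_eq_comul]
  rfl

end GradedHopfQuasigroup

/-- The associator exists and is uniquely determined by the formula `delta0`. -/
theorem gradedHopfQuasigroup_associator_exists_unique
    (hassoc : ∀ a b c, G.mul (G.mul a b) c = G.mul a (G.mul b c)) :
    IsAssociator A hassoc (delta0 A hassoc) ∧
    ∀ δ' : ∀ p q r : Q, H p →ₗ[k] H q →ₗ[k] H r →ₗ[k] H G.one,
      IsAssociator A hassoc δ' → ∀ p q r, δ' p q r = delta0 A hassoc p q r := by
  refine ⟨(A.isAssociator_iff hassoc _).2 fun p q r => ?_,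
    fun δ' hδ' p q r => uncurry3_injective ?_⟩
  · rw [A.uncurry3_delta0, A.conv_gcl_left, ← A.mulRightCoalgHom_toLinearMap,
      A.antipode_conv_cancel_right]
    simp only [← LinearMap.comp_assoc, gcl_comp_gcl, gcl_refl, LinearMap.id_comp]
  · rw [A.uncurry3_delta0, (A.isAssociator_iff hassoc δ').1 hδ' p q r, A.conv_gcl_left,
      ← A.mulRightCoalgHom_toLinearMap, A.conv_antipode_cancel_right]
    simp only [← LinearMap.comp_assoc, gcl_comp_gcl, gcl_refl, LinearMap.id_comp]
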